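/- arXiv:2002.07049 — 3 statements merged into one kernel-verified Lean document; each statement's English description precedes it below -/
import Mathlib

section
/- Let γ be a clock condition over a single clock x all of whose clock constants belong to {C_0, C_1, …, C_k}, where 0 = C_0 < C_1 < … < C_k. Then for every i ∈ {0, …, 2k+1} and all t, t' ∈ J_i, the value t satisfies γ if and only if t' satisfies γ. Consequently, for a one-clock timed automaton whose clock constants all belong to {C_0, …, C_k}, and any two configurations (q, t) and (q, t') with t, t' ∈ J_i, exactly the same transitions are available in (q, t) as in (q, t'). -/
/-- Clock conditions over a set `X` of clocks:
`γ ::= true | x < c | x > c | x = c | γ ∧ γ | γ ∨ γ`. -/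
inductive ClockCond (X : Type) where
  | tt : ClockCond X
  | lt : X → ℝ → ClockCond X
  | gt : X → ℝ → ClockCond X
  | eq : X → ℝ → ClockCond X
  | conj : ClockCond X → ClockCond X → ClockCond X
  | disj : ClockCond X → ClockCond X → ClockCond X

/-- Satisfaction of a clock condition by a clock valuation `ν`. -/
def ClockCond.sat {X : Type} (ν : X → ℝ) : ClockCond X → Prop
  | .tt => True
  | .lt x c => ν x < c
  | .gt x c => ν x > c
  | .eq x c => ν x = c
  | .conj γ₁ γ₂ => γ₁.sat ν ∧ γ₂.sat ν
  | .disj γ₁ γ₂ => γ₁.sat ν ∨ γ₂.sat ν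

/-- A timed automaton with alphabet `A`, state set `Q`, and clock set `X`:
initial states, a transition relation `E ⊆ Q × A × C_X × Q × 2^X`,
and final states. -/
structure TimedAutomaton (A Q X : Type) where
  I : Set Q
  E : Set (Q × A × ClockCond X × Q × Set X)
  F : Set Q

/-- One step of a timed automaton on a stream element `e : A ⊕ ℝ`:
a time span increments all clocks; a letter fires a transition whose clock
condition is satisfied, resetting the clocks in its reset set. -/
def TimedAutomaton.Step {A Q X : Type} (M : TimedAutomaton A Q X)
    (e : A ⊕ ℝ) (c c' : Q × (X → ℝ)) : Prop :=
  match e with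
  | .inr r => c'.1 = c.1 ∧ ∀ x, c'.2 x = c.2 x + r
  | .inl a => ∃ γ Z, (c.1, a, γ, c'.1, Z) ∈ M.E ∧ γ.sat c.2 ∧
      (∀ x ∈ Z, c'.2 x = 0) ∧ (∀ x ∉ Z, c'.2 x = c.2 x)

/-- A run of a timed automaton on a timed word, from a configuration to a
configuration. -/
inductive TimedAutomaton.RunFrom {A Q X : Type} (M : TimedAutomaton A Q X) :
    List (A ⊕ ℝ) → (Q × (X → ℝ)) → (Q × (X → ℝ)) → Prop
  | nil (c) : M.RunFrom [] c c
  | cons {e w c c' c''} : M.Step e c c' → M.RunFrom w c' c'' →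
      M.RunFrom (e :: w) c c''

/-- A timed automaton accepts a timed word if it admits a successful run on
it: starting in an initial state with all clocks `0`, ending in a final
state. -/
def TimedAutomaton.Accepts {A Q X : Type} (M : TimedAutomaton A Q X)
    (w : List (A ⊕ ℝ)) : Prop :=
  ∃ q₀ ∈ M.I, ∃ c' : Q × (X → ℝ), M.RunFrom w (q₀, fun _ => 0) c' ∧ c'.1 ∈ M.F

/-- A timed word: all its real (time span) elements are positive. -/
def IsTimedWord {A : Type} (w : List (A ⊕ ℝ)) : Prop :=
  ∀ e ∈ w, ∀ r : ℝ, e = Sum.inr r → 0 < r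

/-- `M.Active w n` is the set `K_n` of configurations `(q, t)` of a one-clock
timed automaton that are active at step `n` of the stream `w`, i.e. reachable
by a run on the prefix `w[1…n]` from some initial configuration `(q₀, 0)`. -/
def TimedAutomaton.Active {A Q : Type} (M : TimedAutomaton A Q Unit)
    (w : List (A ⊕ ℝ)) (n : ℕ) : Set (Q × ℝ) :=
  {c | ∃ q₀ ∈ M.I, M.RunFrom (w.take n) (q₀, fun _ => 0) (c.1, fun _ => c.2)}

/-- The set of clock constants appearing in a clock condition. -/
def ClockCond.constants {X : Type} : ClockCond X → Set ℝ
  | .tt => ∅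
  | .lt _ c => {c}
  | .gt _ c => {c}
  | .eq _ c => {c}
  | .conj γ₁ γ₂ => γ₁.constants ∪ γ₂.constants
  | .disj γ₁ γ₂ => γ₁.constants ∪ γ₂.constants

/-- The intervals `J_0, …, J_{2k+1}` determined by clock constants
`0 = C 0 < C 1 < … < C k` (with `C (k+1) = ∞`). -/
def Jint (k : ℕ) (C : ℕ → ℝ) (i : ℕ) : Set ℝ :=
  if i % 2 = 0 then {C (i / 2)}
  else if i = 2 * k + 1 then Set.Ioi (C k)
  else Set.Ioo (C (i / 2)) (C (i / 2 + 1))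

/-
A clock value `t` decides an atomic condition `x ⋈ c` only through the
outcome of comparing `t` with `c`. Each `J i` is either a single point or an open
interval with no `C j` inside, so all its points compare alike with every `C j`; by
induction on `γ` they satisfy the same conditions with constants among the `C j`.
-/

namespace ClockCond

theorem sat_iff_of_compare_eq {X : Type} {ν ν' : X → ℝ} {γ : ClockCond X}
    (h : ∀ x, ∀ c ∈ γ.constants, compare (ν x) c = compare (ν' x) c) :
    γ.sat ν ↔ γ.sat ν' := by
  induction γ with
  | tt => rfl
  | lt x c => simp only [sat, ← compare_lt_iff_lt, h x c rfl]
  | gt x c => simp only [sat, gt_iff_lt, ← compare_gt_iff_gt, h x c rfl]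
  | eq x c => simp only [sat, ← compare_eq_iff_eq, h x c rfl]
  | conj γ₁ γ₂ ih₁ ih₂ =>
    exact and_congr (ih₁ fun x c hc => h x c (Or.inl hc)) (ih₂ fun x c hc => h x c (Or.inr hc))
  | disj γ₁ γ₂ ih₁ ih₂ =>
    exact or_congr (ih₁ fun x c hc => h x c (Or.inl hc)) (ih₂ fun x c hc => h x c (Or.inr hc))

end ClockCond

section Jint

variable {k : ℕ} {C : ℕ → ℝ}

theorem Jint_subsingleton_or_subset_Ioi_or_subset_Iio (hC : MonotoneOn C (Set.Iic k))
    {i j : ℕ} (hi : i ≤ 2 * k + 1) (hj : j ≤ k) :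
    (Jint k C i).Subsingleton ∨ Jint k C i ⊆ Set.Ioi (C j) ∨ Jint k C i ⊆ Set.Iio (C j) := by
  unfold Jint
  split_ifs with h_even h_last
  · exact Or.inl Set.subsingleton_singleton
  · exact Or.inr (Or.inl (Set.Ioi_subset_Ioi (hC hj (le_refl k) hj)))
  · have hm : i / 2 + 1 ≤ k := by omega
    rcases le_or_gt j (i / 2) with hji | hij
    · refine Or.inr (Or.inl (Set.Ioo_subset_Ioi_self.trans (Set.Ioi_subset_Ioi ?_)))
      exact hC (show j ≤ k by omega) (show i / 2 ≤ k by omega) hji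
    · refine Or.inr (Or.inr (Set.Ioo_subset_Iio_self.trans (Set.Iio_subset_Iio ?_)))
      exact hC hm hj hij

theorem compare_eq_of_mem_Jint (hC : MonotoneOn C (Set.Iic k)) {i j : ℕ}
    (hi : i ≤ 2 * k + 1) (hj : j ≤ k) {t t' : ℝ}
    (ht : t ∈ Jint k C i) (ht' : t' ∈ Jint k C i) :
    compare t (C j) = compare t' (C j) := by
  rcases Jint_subsingleton_or_subset_Ioi_or_subset_Iio hC hi hj with h | h | h
  · rw [h ht ht']
  · rw [compare_gt_iff_gt.2 (h ht), compare_gt_iff_gt.2 (h ht')]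
  · rw [compare_lt_iff_lt.2 (h ht), compare_lt_iff_lt.2 (h ht')]

theorem ClockCond.sat_iff_of_mem_Jint (hC : MonotoneOn C (Set.Iic k)) {γ : ClockCond Unit}
    (hγ : γ.constants ⊆ {c | ∃ j ≤ k, C j = c}) {i : ℕ} (hi : i ≤ 2 * k + 1) {t t' : ℝ}
    (ht : t ∈ Jint k C i) (ht' : t' ∈ Jint k C i) :
    γ.sat (fun _ => t) ↔ γ.sat (fun _ => t') :=
  ClockCond.sat_iff_of_compare_eq fun _ c hc => by
    obtain ⟨j, hj, rfl⟩ := hγ hc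
    exact compare_eq_of_mem_Jint hC hi hj ht ht'

end Jint

theorem stmt1_general (k : ℕ) (C : ℕ → ℝ)
    (hmono : ∀ i, i < k → C i < C (i + 1))
    (γ : ClockCond Unit)
    (hγ : γ.constants ⊆ {c | ∃ i ≤ k, C i = c})
    {A Q : Type} (M : TimedAutomaton A Q Unit)
    (hM : ∀ e ∈ M.E, (e.2.2.1).constants ⊆ {c | ∃ i ≤ k, C i = c}) :
    (∀ i ≤ 2 * k + 1, ∀ t ∈ Jint k C i, ∀ t' ∈ Jint k C i,
      (γ.sat (fun _ => t) ↔ γ.sat (fun _ => t'))) ∧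
    (∀ i ≤ 2 * k + 1, ∀ t ∈ Jint k C i, ∀ t' ∈ Jint k C i,
      ∀ e ∈ M.E, ((e.2.2.1).sat (fun _ => t) ↔ (e.2.2.1).sat (fun _ => t'))) := by
  have hC : MonotoneOn C (Set.Iic k) := (strictMonoOn_Iic_of_lt_succ hmono).monotoneOn
  exact ⟨fun i hi t ht t' ht' => ClockCond.sat_iff_of_mem_Jint hC hγ hi ht ht',
    fun i hi t ht t' ht' e he => ClockCond.sat_iff_of_mem_Jint hC (hM e he) hi ht ht'⟩

/-- If all clock constants of a one-clock condition `γ` belong to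
`{C 0, …, C k}` where `0 = C 0 < … < C k`, then any two clock values lying in
the same interval `J i` satisfy `γ` or fail it simultaneously.  Consequently,
for a one-clock timed automaton all of whose clock constants belong to
`{C 0, …, C k}`, exactly the same transitions are available in `(q, t)` as in
`(q, t')` whenever `t, t' ∈ J i`. -/
theorem stmt1 (k : ℕ) (C : ℕ → ℝ) (hC0 : C 0 = 0)
    (hmono : ∀ i, i < k → C i < C (i + 1))
    (γ : ClockCond Unit)
    (hγ : γ.constants ⊆ {c | ∃ i ≤ k, C i = c})
    {A Q : Type} (M : TimedAutomaton A Q Unit)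
    (hM : ∀ e ∈ M.E, (e.2.2.1).constants ⊆ {c | ∃ i ≤ k, C i = c}) :
    (∀ i ≤ 2 * k + 1, ∀ t ∈ Jint k C i, ∀ t' ∈ Jint k C i,
      (γ.sat (fun _ => t) ↔ γ.sat (fun _ => t'))) ∧
    (∀ i ≤ 2 * k + 1, ∀ t ∈ Jint k C i, ∀ t' ∈ Jint k C i,
      ∀ e ∈ M.E, ((e.2.2.1).sat (fun _ => t) ↔ (e.2.2.1).sat (fun _ => t'))) :=
  stmt1_general k C hmono γ hγ M hM
end

section
/- Let A be a one-clock timed automaton and w = e_1 e_2 … a timed word. For every n, if (q, t) is a configuration active at step n, then there exists j ∈ {0, 1, …, n} such that t = Σ_{i=j+1}^{n} δ_i, where δ_i = e_i if e_i ∈ ℝ>0 and δ_i = 0 if e_i ∈ Σ. Consequently, the set of active clock values at step n, i.e. {t ∈ ℝ≥0 : (q, t) ∈ K_n for some q}, has at most n + 1 elements. -/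
namespace TimedAutomaton

variable {A Q X : Type}

/-- The paper's `δ_i`. -/
def delay : A ⊕ ℝ → ℝ := Sum.elim (fun _ => 0) id

def suffixDelay (l : List (A ⊕ ℝ)) (j : ℕ) : ℝ := ((l.drop j).map delay).sum

lemma suffixDelay_cons_zero (e : A ⊕ ℝ) (l : List (A ⊕ ℝ)) :
    suffixDelay (e :: l) 0 = delay e + suffixDelay l 0 := by
  simp [suffixDelay]

lemma step_clock_eq {M : TimedAutomaton A Q X} {e : A ⊕ ℝ} {c c' : Q × (X → ℝ)}
    (h : M.Step e c c') (x : X) : c'.2 x = c.2 x + delay e ∨ c'.2 x = 0 := by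
  cases e with
  | inr r => exact .inl (h.2 x)
  | inl a =>
    obtain ⟨-, Z, -, -, hreset, hkeep⟩ := h
    by_cases hx : x ∈ Z
    · exact .inr (hreset x hx)
    · exact .inl (by simp [hkeep x hx, delay])

/-- Either the clock is never reset along the run, or it is last reset by the `j`-th element,
after which it only accumulates the delays of `l.drop j`. -/
theorem RunFrom.clock_eq {M : TimedAutomaton A Q X} {l : List (A ⊕ ℝ)}
    {c c' : Q × (X → ℝ)} (h : M.RunFrom l c c') (x : X) :
    c'.2 x = c.2 x + suffixDelay l 0 ∨
      ∃ j, 0 < j ∧ j ≤ l.length ∧ c'.2 x = suffixDelay l j := by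
  induction h with
  | nil c => simp [suffixDelay]
  | @cons e l c c' c'' step _ ih =>
    rcases ih with hnoreset | ⟨j, -, hjl, hj⟩
    · rcases step_clock_eq step x with hstep | hreset
      · left
        rw [hnoreset, hstep, suffixDelay_cons_zero, add_assoc]
      · right
        exact ⟨1, Nat.one_pos, by simp, by rw [hnoreset, hreset, zero_add]; rfl⟩
    · right
      exact ⟨j + 1, j.succ_pos, by simpa using hjl, hj⟩

theorem RunFrom.clock_eq_suffixDelay_of_zero {M : TimedAutomaton A Q X}
    {l : List (A ⊕ ℝ)} {q : Q} {c' : Q × (X → ℝ)} (h : M.RunFrom l (q, fun _ => 0) c')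
    (x : X) : ∃ j ≤ l.length, c'.2 x = suffixDelay l j := by
  rcases h.clock_eq x with hnoreset | ⟨j, -, hjl, hj⟩
  · exact ⟨0, Nat.zero_le _, by simpa using hnoreset⟩
  · exact ⟨j, hjl, hj⟩

theorem exists_suffixDelay_of_mem_active {M : TimedAutomaton A Q Unit} {w : List (A ⊕ ℝ)}
    {n : ℕ} {q : Q} {t : ℝ} (h : (q, t) ∈ M.Active w n) :
    ∃ j ≤ n, t = suffixDelay (w.take n) j := by
  obtain ⟨q₀, -, hrun⟩ := h
  obtain ⟨j, hj, ht⟩ := hrun.clock_eq_suffixDelay_of_zero ()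
  exact ⟨j, hj.trans (List.length_take_le n w), ht⟩

end TimedAutomaton

theorem stmt5_general {A Q : Type} (M : TimedAutomaton A Q Unit)
    (w : List (A ⊕ ℝ)) (n : ℕ) :
    (∀ q : Q, ∀ t : ℝ, (q, t) ∈ M.Active w n →
      ∃ j ≤ n, t = (((w.take n).drop j).map (Sum.elim (fun _ => 0) id)).sum) ∧
    ({t : ℝ | ∃ q : Q, (q, t) ∈ M.Active w n}.Finite ∧
      {t : ℝ | ∃ q : Q, (q, t) ∈ M.Active w n}.ncard ≤ n + 1) := by
  have hsub : {t : ℝ | ∃ q : Q, (q, t) ∈ M.Active w n} ⊆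
      ↑((Finset.range (n + 1)).image (TimedAutomaton.suffixDelay (w.take n))) := by
    rintro t ⟨q, hq⟩
    obtain ⟨j, hj, ht⟩ := TimedAutomaton.exists_suffixDelay_of_mem_active hq
    exact Finset.mem_image.2 ⟨j, Finset.mem_range.2 (Nat.lt_succ_of_le hj), ht.symm⟩
  refine ⟨fun _ _ => TimedAutomaton.exists_suffixDelay_of_mem_active,
    (Finset.finite_toSet _).subset hsub, ?_⟩
  calc _ ≤ ((Finset.range (n + 1)).image (TimedAutomaton.suffixDelay (w.take n))).card :=
        (Set.ncard_le_ncard hsub).trans_eq (Set.ncard_coe_finset _)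
    _ ≤ n + 1 := Finset.card_image_le.trans_eq (Finset.card_range _)

/-- If `(q, t)` is active at step `n`, then `t` is the sum of the time spans
`δ_i` (with `δ_i = e_i` for a time span, `δ_i = 0` for a letter) over some
suffix `i ∈ {j+1, …, n}` of the prefix `w[1…n]`.  Consequently the set of
active clock values at step `n` is finite, of cardinality at most `n + 1`. -/
theorem stmt5 {A Q : Type} (M : TimedAutomaton A Q Unit)
    (w : List (A ⊕ ℝ)) (hw : IsTimedWord w) (n : ℕ) :
    (∀ q : Q, ∀ t : ℝ, (q, t) ∈ M.Active w n →
      ∃ j ≤ n, t = (((w.take n).drop j).map (Sum.elim (fun _ => 0) id)).sum) ∧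
    ({t : ℝ | ∃ q : Q, (q, t) ∈ M.Active w n}.Finite ∧
      {t : ℝ | ∃ q : Q, (q, t) ∈ M.Active w n}.ncard ≤ n + 1) :=
  stmt5_general M w n
end

section
/- Let A = (Σ, Q, I, E, F) be a finite automaton and C a positive integer, and let Â be the one-clock timed automaton Â = (Σ, Q ∪ {q̂}, {x}, I, Ê, {q̂}) with q̂ ∉ Q, where Ê consists of: (q, a, true, q', ∅) for every transition (q, a, q') ∈ E; (q, a, x = C, q̂, ∅) for every transition (q, a, q') ∈ E with q' ∈ F; and (q, a, true, q, {x}) for every q ∈ I and a ∈ Σ. Then for every word a_1 … a_n ∈ Σ* with n ≥ C, Â accepts the timed word 1 a_1 1 a_2 … 1 a_n if and only if A accepts the C-letter factor a_{n−C+1} … a_n; moreover, for n < C, Â does not accept 1 a_1 … 1 a_n. -/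
/-- A (nondeterministic) finite automaton with alphabet `A` and states `Q`. -/
structure FiniteAutomaton (A Q : Type) where
  I : Set Q
  E : Set (Q × A × Q)
  F : Set Q

/-- A run of a finite automaton on a word, from a state to a state. -/
inductive FiniteAutomaton.RunFrom {A Q : Type} (M : FiniteAutomaton A Q) :
    List A → Q → Q → Prop
  | nil (q) : M.RunFrom [] q q
  | cons {a w q q' q''} : (q, a, q') ∈ M.E → M.RunFrom w q' q'' →
      M.RunFrom (a :: w) q q''

/-- A finite automaton accepts a word if it admits a successful run on it. -/
def FiniteAutomaton.Accepts {A Q : Type} (M : FiniteAutomaton A Q)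
    (w : List A) : Prop :=
  ∃ q₀ ∈ M.I, ∃ qf ∈ M.F, M.RunFrom w q₀ qf

/-- The timed word `1 a_1 1 a_2 … 1 a_n` associated with the word
`a_1 a_2 … a_n`. -/
def interleave {A : Type} : List A → List (A ⊕ ℝ)
  | [] => []
  | a :: as => Sum.inr (1 : ℝ) :: Sum.inl a :: interleave as

/-- The transition relation of the sliding-window timed automaton `Â`
associated with a finite automaton `M` and window width `C`:
`(q, a, true, q', ∅)` for every `(q, a, q') ∈ E`; `(q, a, x = C, q̂, ∅)` for
every `(q, a, q') ∈ E` with `q' ∈ F` (where `q̂ = Sum.inr ()`); and the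
resetting loops `(q, a, true, q, {x})` for `q ∈ I` and all letters `a`. -/
def hatE {A Q : Type} (M : FiniteAutomaton A Q) (C : ℕ) :
    Set ((Q ⊕ Unit) × A × ClockCond Unit × (Q ⊕ Unit) × Set Unit) :=
  {e | ∃ q a q', (q, a, q') ∈ M.E ∧
      e = (Sum.inl q, a, ClockCond.tt, Sum.inl q', (∅ : Set Unit))} ∪
  {e | ∃ q a q', (q, a, q') ∈ M.E ∧ q' ∈ M.F ∧
      e = (Sum.inl q, a, ClockCond.eq () (C : ℝ), Sum.inr (), (∅ : Set Unit))} ∪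
  {e | ∃ q a, q ∈ M.I ∧
      e = (Sum.inl q, a, ClockCond.tt, Sum.inl q, ({()} : Set Unit))}

section SWAux

variable {A Q : Type}

/-- The sliding-window timed automaton. -/
abbrev hatTA (M : FiniteAutomaton A Q) (C : ℕ) : TimedAutomaton A (Q ⊕ Unit) Unit :=
  ⟨Sum.inl '' M.I, hatE M C, {Sum.inr ()}⟩

lemma interleave_append (xs ys : List A) :
    interleave (xs ++ ys) = interleave xs ++ interleave ys := by
  induction xs with
  | nil => rfl
  | cons a xs ih => simp [interleave, ih]

lemma runFrom_append {Q' X : Type} {M : TimedAutomaton A Q' X} {w1 w2 c c' c''}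
    (h1 : M.RunFrom w1 c c') (h2 : M.RunFrom w2 c' c'') :
    M.RunFrom (w1 ++ w2) c c'' := by
  induction h1 with
  | nil => exact h2
  | cons s _ ih => exact .cons s (ih h2)

lemma run_cons_inv {Q' X : Type} {M : TimedAutomaton A Q' X} {e w c c''}
    (h : M.RunFrom (e :: w) c c'') : ∃ c', M.Step e c c' ∧ M.RunFrom w c' c'' := by
  cases h with
  | cons s r => exact ⟨_, s, r⟩

lemma noRun {M : FiniteAutomaton A Q} {C : ℕ} (a : A) (w : List A)
    (c c' : (Q ⊕ Unit) × (Unit → ℝ)) (hc : c.1 = Sum.inr ()) :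
    ¬ (hatTA M C).RunFrom (interleave (a :: w)) c c' := by
  intro h
  obtain ⟨c1, s1, h2⟩ := run_cons_inv h
  obtain ⟨c2, s2, _⟩ := run_cons_inv h2
  obtain ⟨hq1, -⟩ := s1
  obtain ⟨γ, Z, hE, -⟩ := s2
  simp only [hatTA, hatE, Set.mem_union, Set.mem_setOf_eq] at hE
  rcases hE with (⟨q₁, a₁, q₁', _, heq⟩ | ⟨q₁, a₁, q₁', _, _, heq⟩) | ⟨q₁, a₁, _, heq⟩ <;>
    simp [Prod.ext_iff, hq1, hc] at heq

lemma simRun {M : FiniteAutomaton A Q} {C : ℕ} {cs : List A} {p qf : Q}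
    (h : M.RunFrom cs p qf) (hF : qf ∈ M.F) :
    ∀ ν : Unit → ℝ, cs ≠ [] → ν () + cs.length = C →
    ∃ ν', (hatTA M C).RunFrom (interleave cs) (Sum.inl p, ν) (Sum.inr (), ν') := by
  induction h with
  | nil q => intro _ hne _; exact absurd rfl hne
  | @cons a w q q' q'' hE hrun ih =>
    intro ν _ hlen
    have step1 : (hatTA M C).Step (Sum.inr (1 : ℝ)) (Sum.inl q, ν)
        (Sum.inl q, fun _ => ν () + 1) := ⟨rfl, fun x => by cases x; rfl⟩
    cases w with
    | nil =>
      cases hrun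
      refine ⟨fun _ => ν () + 1, .cons step1 (.cons ?_ (.nil _))⟩
      refine ⟨ClockCond.eq () (C : ℝ), ∅, ?_, ?_, by simp, fun x _ => rfl⟩
      · simp only [hatTA, hatE, Set.mem_union, Set.mem_setOf_eq]
        exact Or.inl (Or.inr ⟨_, _, _, hE, hF, rfl⟩)
      · show ν () + 1 = (C : ℝ)
        simpa using hlen
    | cons b w' =>
      have step2 : (hatTA M C).Step (Sum.inl a) (Sum.inl q, fun _ => ν () + 1)
          (Sum.inl q', fun _ => ν () + 1) := by
        refine ⟨ClockCond.tt, ∅, ?_, trivial, by simp, fun x _ => rfl⟩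
        simp only [hatTA, hatE, Set.mem_union, Set.mem_setOf_eq]
        exact Or.inl (Or.inl ⟨q, a, q', hE, rfl⟩)
      obtain ⟨ν', hrun'⟩ := ih hF (fun _ => ν () + 1) (List.cons_ne_nil _ _)
        (by push_cast [List.length_cons] at hlen ⊢; linarith)
      exact ⟨ν', .cons step1 (.cons step2 hrun')⟩

lemma loopRun {M : FiniteAutomaton A Q} {C : ℕ} {p : Q} (hp : p ∈ M.I) :
    ∀ (bs : List A) (ν : Unit → ℝ), bs ≠ [] →
    (hatTA M C).RunFrom (interleave bs) (Sum.inl p, ν) (Sum.inl p, fun _ => 0) := by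
  intro bs
  induction bs with
  | nil => intro _ h; exact absurd rfl h
  | cons a bs ih =>
    intro ν _
    have step1 : (hatTA M C).Step (Sum.inr (1 : ℝ)) (Sum.inl p, ν)
        (Sum.inl p, fun _ => ν () + 1) := ⟨rfl, fun x => by cases x; rfl⟩
    have step2 : (hatTA M C).Step (Sum.inl a) (Sum.inl p, fun _ => ν () + 1)
        (Sum.inl p, fun _ => (0 : ℝ)) := by
      refine ⟨ClockCond.tt, {()}, ?_, trivial, by simp, by simp⟩
      simp only [hatTA, hatE, Set.mem_union, Set.mem_setOf_eq]
      exact Or.inr ⟨p, a, hp, rfl⟩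
    cases bs with
    | nil => exact .cons step1 (.cons step2 (.nil _))
    | cons b bs' => exact .cons step1 (.cons step2 (ih _ (by simp)))

lemma fwdRun {M : FiniteAutomaton A Q} {C : ℕ} :
    ∀ (as : List A) (q : Q) (ν : Unit → ℝ) (c' : (Q ⊕ Unit) × (Unit → ℝ)),
    (hatTA M C).RunFrom (interleave as) (Sum.inl q, ν) c' → c'.1 = Sum.inr () →
    ∃ j ≤ as.length, ∃ p qf, qf ∈ M.F ∧ M.RunFrom (as.drop j) p qf ∧ as.drop j ≠ [] ∧
      ((j = 0 ∧ p = q ∧ ν () + as.length = C) ∨ (p ∈ M.I ∧ as.length - j = C)) := by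
  intro as
  induction as with
  | nil =>
    intro q ν c' h hc
    cases h
    simp at hc
  | cons a as ih =>
    intro q ν c' h hc
    obtain ⟨c1, s1, h2⟩ := run_cons_inv h
    obtain ⟨c2, s2, h3⟩ := run_cons_inv h2
    obtain ⟨hq1, hν1⟩ := s1
    obtain ⟨γ, Z, hE, hsat, hres, hkeep⟩ := s2
    obtain ⟨s2st, ν2⟩ := c2
    simp only [hatTA, hatE, Set.mem_union, Set.mem_setOf_eq] at hE
    rcases hE with (⟨q₁, a₁, q₁', hEm, heq⟩ | ⟨q₁, a₁, q₁', hEm, hFm, heq⟩) | ⟨q₁, a₁, hIm, heq⟩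
    · -- normal transition
      simp only [Prod.mk.injEq] at heq
      obtain ⟨e1, e2, e3, e4, e5⟩ := heq
      rw [hq1] at e1
      obtain rfl : q₁ = q := by simpa using e1.symm
      subst e2 e3 e4 e5
      have hν2 : ν2 () = ν () + 1 := by
        have := hkeep () (by simp)
        simp only at this
        rw [this, hν1 ()]
      obtain ⟨j, hj, p, qf, hqf, hr, hne, hbr⟩ := ih q₁' ν2 c' h3 hc
      rcases hbr with ⟨rfl, rfl, hnum⟩ | ⟨hpI, hnum⟩
      · refine ⟨0, by simp, q₁, qf, hqf, .cons hEm (by simpa using hr), by simp, Or.inl ⟨rfl, rfl, ?_⟩⟩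
        rw [hν2] at hnum
        push_cast [List.length_cons] at hnum ⊢
        linarith
      · exact ⟨j + 1, by simpa using Nat.succ_le_succ hj, p, qf, hqf, by simpa using hr,
          by simpa using hne, Or.inr ⟨hpI, by simp; omega⟩⟩
    · -- final transition
      simp only [Prod.mk.injEq] at heq
      obtain ⟨e1, e2, e3, e4, e5⟩ := heq
      rw [hq1] at e1
      obtain rfl : q₁ = q := by simpa using e1.symm
      subst e2 e3
      have hCnum : ν () + 1 = (C : ℝ) := by
        have : c1.2 () = (C : ℝ) := hsat
        rw [hν1 ()] at this
        exact this
      cases as with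
      | nil =>
        refine ⟨0, by simp, q₁, q₁', hFm, .cons hEm (.nil _), by simp, Or.inl ⟨rfl, rfl, ?_⟩⟩
        simpa using hCnum
      | cons b as' =>
        exact absurd h3 (noRun b as' _ c' e4)
    · -- reset loop
      simp only [Prod.mk.injEq] at heq
      obtain ⟨e1, e2, e3, e4, e5⟩ := heq
      rw [hq1] at e1
      obtain rfl : q₁ = q := by simpa using e1.symm
      subst e2 e3 e4 e5
      have hν2 : ν2 () = 0 := hres () (by simp)
      obtain ⟨j, hj, p, qf, hqf, hr, hne, hbr⟩ := ih q₁ ν2 c' h3 hc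
      rcases hbr with ⟨rfl, rfl, hnum⟩ | ⟨hpI, hnum⟩
      · refine ⟨1, by simp, p, qf, hqf, by simpa using hr, by simpa using hne,
          Or.inr ⟨hIm, ?_⟩⟩
        rw [hν2] at hnum
        simp only [List.length_cons]
        have : as.length = C := by exact_mod_cast by simpa using hnum
        omega
      · exact ⟨j + 1, by simpa using Nat.succ_le_succ hj, p, qf, hqf, by simpa using hr,
          by simpa using hne, Or.inr ⟨hpI, by simp; omega⟩⟩

end SWAux

/-- The sliding-window reduction: for every word `as` of length `n ≥ C`, the
timed automaton `Â` accepts `1 a_1 … 1 a_n` iff the finite automaton `M`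
accepts the `C`-letter factor `a_{n−C+1} … a_n`; and for `n < C`, `Â` does not
accept `1 a_1 … 1 a_n`. -/
theorem stmt10 {A Q : Type} (M : FiniteAutomaton A Q) (C : ℕ) (hC : 0 < C) :
    ∀ as : List A,
      (C ≤ as.length →
        (TimedAutomaton.Accepts
            (⟨Sum.inl '' M.I, hatE M C, {Sum.inr ()}⟩ :
              TimedAutomaton A (Q ⊕ Unit) Unit)
            (interleave as)
          ↔ M.Accepts (as.drop (as.length - C)))) ∧
      (as.length < C →
        ¬ TimedAutomaton.Accepts
            (⟨Sum.inl '' M.I, hatE M C, {Sum.inr ()}⟩ :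
              TimedAutomaton A (Q ⊕ Unit) Unit)
            (interleave as)) := by
  intro as
  constructor
  · intro hlen
    constructor
    · rintro ⟨q₀, hq₀, c', hrun, hfin⟩
      obtain ⟨q0, hq0I, rfl⟩ := hq₀
      have hc : c'.1 = Sum.inr () := hfin
      obtain ⟨j, hj, p, qf, hqf, hr, hne, hbr⟩ := fwdRun as q0 _ c' hrun hc
      rcases hbr with ⟨rfl, rfl, hC'⟩ | ⟨hpI, hC'⟩
      · have hlC : as.length = C := by exact_mod_cast by simpa using hC'
        refine ⟨_, hq0I, _, hqf, ?_⟩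
        have : as.length - C = 0 := by omega
        rw [this]
        simpa using hr
      · have hj' : as.length - C = j := by omega
        exact ⟨p, hpI, qf, hqf, by rwa [hj']⟩
    · rintro ⟨q0, hq0I, qf, hqf, hr⟩
      have hlds : (as.drop (as.length - C)).length = C := by
        rw [List.length_drop]; omega
      have hdsne : as.drop (as.length - C) ≠ [] := by
        intro h; rw [h] at hlds; simp at hlds; omega
      obtain ⟨ν', h'⟩ := simRun (C := C) hr hqf (fun _ => 0) hdsne (by simp [hlds])
      refine ⟨Sum.inl q0, ⟨q0, hq0I, rfl⟩, (Sum.inr (), ν'), ?_, rfl⟩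
      rcases eq_or_ne (as.take (as.length - C)) [] with hbs | hbs
      · have has : as = as.drop (as.length - C) := by
          conv_lhs => rw [← List.take_append_drop (as.length - C) as]
          rw [hbs, List.nil_append]
        rw [has]
        exact h'
      · have hloop := loopRun (C := C) hq0I (as.take (as.length - C)) (fun _ => 0) hbs
        have hsplit : interleave as =
            interleave (as.take (as.length - C)) ++ interleave (as.drop (as.length - C)) := by
          rw [← interleave_append, List.take_append_drop]
        rw [hsplit]
        exact runFrom_append hloop h'
  · rintro hlt ⟨q₀, hq₀, c', hrun, hfin⟩
    obtain ⟨q0, hq0I, rfl⟩ := hq₀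
    have hc : c'.1 = Sum.inr () := hfin
    obtain ⟨j, hj, p, qf, hqf, hr, hne, hbr⟩ := fwdRun as q0 _ c' hrun hc
    rcases hbr with ⟨rfl, rfl, hC'⟩ | ⟨hpI, hC'⟩
    · have hlC : as.length = C := by exact_mod_cast by simpa using hC'
      omega
    · omega
end
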